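/- arXiv:1404.3494 — 5 statements merged into one kernel-verified Lean document; each statement's English description precedes it below -/
import Mathlib

section
/- For each c ∈ {1, 2}, the polynomial F(n) = n² + c is recursively-factorable. -/
/-!
Write `n ^ 2 + c = p * q` with `2 ≤ |p| ≤ |q|`, and let `r` be the balanced residue of `n`
modulo `p`. Then `4 r ^ 2 ≤ p ^ 2 ≤ |p * q| = n ^ 2 + c`, and this is `< 4 n ^ 2` as soon as
`c < 3 n ^ 2`; since `n ^ 2 + c ≥ 4` and `c < 3` force `n ≠ 0`, we get `r ^ 2 < n ^ 2`.
-/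

/-- A polynomial `F` with integer coefficients (here given by its value function) is
*recursively-factorable* if for every `n ∈ ℤ` and all integers `p, q` with `F(n) = p·q`,
`|p| ≠ 1` and `|q| ≠ 1`, there exists `r ∈ ℤ` with `|F(r)| < |F(n)|` and `r ≡ n (mod |p|)`
or `r ≡ n (mod |q|)` (congruence mod 0 meaning equality, which is exactly divisibility of
`r - n` by `p` resp. `q`). -/
def RecursivelyFactorable (F : ℤ → ℤ) : Prop :=
  ∀ n p q : ℤ, F n = p * q → |p| ≠ 1 → |q| ≠ 1 →
    ∃ r : ℤ, |F r| < |F n| ∧ (p ∣ (r - n) ∨ q ∣ (r - n))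

lemma Int.exists_dvd_sub_four_mul_sq_le (n p : ℤ) (hp : p ≠ 0) :
    ∃ r : ℤ, p ∣ r - n ∧ 4 * r ^ 2 ≤ p ^ 2 := by
  refine ⟨n.bmod p.natAbs, Int.natAbs_dvd.mp Int.dvd_bmod_sub_self, ?_⟩
  have hpos : 0 < p.natAbs := Int.natAbs_pos.mpr hp
  have hlo := Int.le_bmod (x := n) hpos
  have hhi := Int.bmod_lt (x := n) hpos
  have habs : |2 * n.bmod p.natAbs| ≤ |p| := by
    rw [Int.abs_eq_natAbs p, abs_le]
    omega
  calc 4 * n.bmod p.natAbs ^ 2 = (2 * n.bmod p.natAbs) ^ 2 := by ring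
    _ ≤ p ^ 2 := sq_le_sq.mpr habs

lemma two_le_abs_of_mul_ne_zero {p q : ℤ} (hpq : p * q ≠ 0) (hp : |p| ≠ 1) : 2 ≤ |p| := by
  have := abs_pos.mpr (left_ne_zero_of_mul hpq)
  omega

theorem recursivelyFactorable_sq_add {c : ℤ} (hc₀ : 0 < c) (hc₃ : c < 3) :
    RecursivelyFactorable (fun n : ℤ => n ^ 2 + c) := by
  intro n p q hF hp hq
  beta_reduce at hF ⊢
  wlog hle : |p| ≤ |q| generalizing p q
  · obtain ⟨r, hr, hdvd⟩ := this q p (by rw [hF, mul_comm]) hq hp (le_of_not_ge hle)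
    exact ⟨r, hr, hdvd.symm⟩
  have hFpos : 0 < n ^ 2 + c := by positivity
  have hp₂ : 2 ≤ |p| := two_le_abs_of_mul_ne_zero (hF ▸ hFpos.ne') hp
  obtain ⟨r, hdvd, hr⟩ := Int.exists_dvd_sub_four_mul_sq_le n p (abs_pos.mp (by omega))
  have hp_sq_le : p ^ 2 ≤ n ^ 2 + c :=
    calc p ^ 2 = |p| * |p| := by rw [sq, abs_mul_abs_self]
      _ ≤ |p| * |q| := mul_le_mul_of_nonneg_left hle (abs_nonneg p)
      _ = n ^ 2 + c := by rw [← abs_mul, ← hF, abs_of_pos hFpos]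
  have hr_lt : r ^ 2 < n ^ 2 := by nlinarith [sq_abs p]
  refine ⟨r, ?_, Or.inl hdvd⟩
  rw [abs_of_pos hFpos, abs_of_pos (by positivity)]
  omega

/-- For each `c ∈ {1, 2}`, the polynomial `F(n) = n ^ 2 + c` is
recursively-factorable. -/
theorem stmt_5 :
    ∀ c : ℤ, c ∈ ({1, 2} : Set ℤ) →
      RecursivelyFactorable (fun n : ℤ => n ^ 2 + c) := by
  rintro c (rfl | rfl) <;> exact recursivelyFactorable_sq_add (by norm_num) (by norm_num)
end

section
/- For each c ∈ {1, 2, 3, 5, 11, 17, 41}, the Euler-like polynomial F(n) = n² + n + c is recursively-factorable. -/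
namespace EulerPoly

variable {c : ℤ}

lemma pos (hc : 0 < c) (n : ℤ) : 0 < n ^ 2 + n + c := by
  nlinarith [sq_nonneg (2 * n + 1)]

lemma exists_dvd_sub_lt_of_lt_abs {n d : ℤ} (hd : 0 < d) (h : d < |2 * n + 1|) :
    ∃ r, d ∣ r - n ∧ r ^ 2 + r + c < n ^ 2 + n + c := by
  rcases abs_cases (2 * n + 1) with ⟨habs, -⟩ | ⟨habs, -⟩
  · exact ⟨n - d, ⟨-1, by ring⟩, by nlinarith⟩
  · exact ⟨n + d, ⟨1, by ring⟩, by nlinarith⟩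

lemma three_mul_sq_le {n p q : ℤ} (hc : 0 < c) (hpq : n ^ 2 + n + c = p * q)
    (hpq_le : |p| ≤ |q|) (hp : |2 * n + 1| ≤ |p|) : 3 * p ^ 2 ≤ 4 * c - 1 := by
  have hsq : p ^ 2 ≤ n ^ 2 + n + c := by
    calc p ^ 2 = |p| * |p| := by rw [← sq_abs, sq]
      _ ≤ |p| * |q| := mul_le_mul_of_nonneg_left hpq_le (abs_nonneg p)
      _ = n ^ 2 + n + c := by rw [← abs_mul, ← hpq, abs_of_pos (pos hc n)]
  have hvertex : (2 * n + 1) ^ 2 ≤ p ^ 2 := sq_le_sq.mpr hp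
  nlinarith

lemma exists_dvd_sub_lt_of_eq_mul {n p q : ℤ} (hc : 0 < c)
    (hsmall : ∀ d m : ℤ, 2 ≤ d → 3 * d ^ 2 ≤ 4 * c - 1 → ¬ d ∣ m ^ 2 + m + c)
    (hpq : n ^ 2 + n + c = p * q) (hp : 2 ≤ |p|) (hpq_le : |p| ≤ |q|) :
    ∃ r, p ∣ r - n ∧ r ^ 2 + r + c < n ^ 2 + n + c := by
  by_cases hnear : |p| < |2 * n + 1|
  · obtain ⟨r, hr, hlt⟩ := exists_dvd_sub_lt_of_lt_abs (c := c) (by omega) hnear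
    exact ⟨r, (self_dvd_abs p).trans hr, hlt⟩
  · refine absurd ((abs_dvd p _).mpr ⟨q, hpq⟩) (hsmall |p| n hp ?_)
    simpa only [sq_abs] using three_mul_sq_le hc hpq hpq_le (not_lt.mp hnear)

theorem recursivelyFactorable (hc : 0 < c)
    (hsmall : ∀ d m : ℤ, 2 ≤ d → 3 * d ^ 2 ≤ 4 * c - 1 → ¬ d ∣ m ^ 2 + m + c) :
    RecursivelyFactorable (fun n => n ^ 2 + n + c) := by
  intro n p q (hpq : n ^ 2 + n + c = p * q) hp hq
  have hpq0 : p * q ≠ 0 := hpq ▸ (pos hc n).ne'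
  have hp2 : 2 ≤ |p| := by
    have := abs_pos.mpr (left_ne_zero_of_mul hpq0); omega
  have hq2 : 2 ≤ |q| := by
    have := abs_pos.mpr (right_ne_zero_of_mul hpq0); omega
  suffices ∃ r, r ^ 2 + r + c < n ^ 2 + n + c ∧ (p ∣ r - n ∨ q ∣ r - n) by
    obtain ⟨r, hlt, hdvd⟩ := this
    exact ⟨r, by rwa [abs_of_pos (pos hc r), abs_of_pos (pos hc n)], hdvd⟩
  rcases le_total |p| |q| with hle | hle
  · obtain ⟨r, hr, hlt⟩ := exists_dvd_sub_lt_of_eq_mul hc hsmall hpq hp2 hle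
    exact ⟨r, hlt, .inl hr⟩
  · obtain ⟨r, hr, hlt⟩ :=
      exists_dvd_sub_lt_of_eq_mul hc hsmall (hpq.trans (mul_comm p q)) hq2 hle
    exact ⟨r, hlt, .inr hr⟩

lemma not_dvd_of_forall_lt {B : ℕ} (hB : 4 * c - 1 < 3 * B ^ 2)
    (hcheck : ∀ d : ℕ, d < B → 2 ≤ d → 3 * (d : ℤ) ^ 2 ≤ 4 * c - 1 →
      ∀ k : ℕ, k < d → ¬ (d : ℤ) ∣ k ^ 2 + k + c)
    (d m : ℤ) (hd : 2 ≤ d) (hdc : 3 * d ^ 2 ≤ 4 * c - 1) : ¬ d ∣ m ^ 2 + m + c := by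
  lift d to ℕ using by omega
  have hdB : d < B := by
    have : (d : ℤ) < B := by nlinarith
    exact_mod_cast this
  have hmod : ((m % d).toNat : ℤ) = m % d := Int.toNat_of_nonneg (Int.emod_nonneg m (by omega))
  have hlt : (m % d).toNat < d := by
    have := Int.emod_lt_of_pos m (show (0 : ℤ) < d by omega); omega
  have hcong : (m % d) ^ 2 + m % d + c ≡ m ^ 2 + m + c [ZMOD d] :=
    (((Int.mod_modEq m d).pow 2).add (Int.mod_modEq m d)).add_right c
  rw [← hcong.dvd_iff, ← hmod]
  exact hcheck d hdB (by exact_mod_cast hd) hdc _ hlt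

end EulerPoly

/-- For each `c ∈ {1, 2, 3, 5, 11, 17, 41}`, the polynomial `F(n) = n ^ 2 + n + c` is
recursively-factorable. -/
theorem stmt_6 :
    ∀ c : ℤ, c ∈ ({1, 2, 3, 5, 11, 17, 41} : Set ℤ) →
      RecursivelyFactorable (fun n : ℤ => n ^ 2 + n + c) := by
  intro c hc
  simp only [Set.mem_insert_iff, Set.mem_singleton_iff] at hc
  rcases hc with rfl | rfl | rfl | rfl | rfl | rfl | rfl <;>
    exact EulerPoly.recursivelyFactorable (by norm_num)
      (EulerPoly.not_dvd_of_forall_lt (B := 8) (by norm_num) (by decide))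
end

section
/- For each c ∈ {1, 2, 3, 7, 19}, the polynomial F(n) = 2n² + 2n + c is recursively-factorable. -/
lemma two_mul_sq_add_two_mul_add_pos {c : ℤ} (hc : 0 < c) (n : ℤ) :
    0 < 2 * n ^ 2 + 2 * n + c := by
  nlinarith [sq_nonneg (2 * n + 1)]

lemma exists_dvd_sub_abs_two_mul_add_one_le {m : ℤ} (hm : 0 < m) (n : ℤ) :
    ∃ r : ℤ, m ∣ r - n ∧ |2 * r + 1| ≤ m := by
  refine ⟨(n + m / 2) % m - m / 2, ?_, ?_⟩
  · have := (Int.mod_modEq (n + m / 2) m).symm.dvd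
    rwa [show (n + m / 2) % m - m / 2 - n = (n + m / 2) % m - (n + m / 2) by ring]
  · have hlo := Int.emod_nonneg (n + m / 2) hm.ne'
    have hhi := Int.emod_lt_of_pos (n + m / 2) hm
    rw [abs_le]
    constructor <;> omega

lemma sq_le_abs_of_eq_mul {R : Type*} [Ring R] [LinearOrder R] [IsStrictOrderedRing R]
    {a p q : R} (h : a = p * q) (hpq : |p| ≤ |q|) : p ^ 2 ≤ |a| := by
  rw [h, abs_mul, ← sq_abs]
  exact pow_two |p| ▸ mul_le_mul_of_nonneg_left hpq (abs_nonneg p)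

lemma exists_abs_lt_of_eq_mul {c n p q : ℤ} (hc : 0 < c) (hF : 2 * n ^ 2 + 2 * n + c = p * q)
    (hp : 2 * c - 1 < p ^ 2) (hpq : |p| ≤ |q|) :
    ∃ r : ℤ, |2 * r ^ 2 + 2 * r + c| < |2 * n ^ 2 + 2 * n + c| ∧ p ∣ r - n := by
  have hFn := two_mul_sq_add_two_mul_add_pos hc n
  have hp0 : p ≠ 0 := left_ne_zero_of_mul (hF ▸ hFn.ne')
  obtain ⟨r, hdvd, hr⟩ := exists_dvd_sub_abs_two_mul_add_one_le (abs_pos.mpr hp0) n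
  have hr_sq : (2 * r + 1) ^ 2 ≤ p ^ 2 := sq_le_sq.mpr hr
  have hpF : p ^ 2 ≤ 2 * n ^ 2 + 2 * n + c := abs_of_pos hFn ▸ sq_le_abs_of_eq_mul hF hpq
  refine ⟨r, ?_, (abs_dvd p _).mp hdvd⟩
  rw [abs_of_pos (two_mul_sq_add_two_mul_add_pos hc r), abs_of_pos hFn]
  nlinarith

theorem recursivelyFactorable_of_no_small_divisor {c : ℤ} (hc : 0 < c)
    (H : ∀ (n : ℤ) (d : ℕ), 2 ≤ d → (d : ℤ) ^ 2 ≤ 2 * c - 1 → ¬ (d : ℤ) ∣ 2 * n ^ 2 + 2 * n + c) :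
    RecursivelyFactorable (fun n : ℤ => 2 * n ^ 2 + 2 * n + c) := by
  intro n p q hF hp hq
  have large : ∀ d e : ℤ, 2 * n ^ 2 + 2 * n + c = d * e → |d| ≠ 1 → 2 * c - 1 < d ^ 2 := by
    intro d e hde hd
    have hd0 : d ≠ 0 := left_ne_zero_of_mul (hde ▸ (two_mul_sq_add_two_mul_add_pos hc n).ne')
    have hd2 : 2 ≤ d.natAbs := by
      rw [Int.abs_eq_natAbs] at hd; have := Int.natAbs_pos.mpr hd0; omega
    by_contra! hle
    exact H n d.natAbs hd2 (by rwa [Int.natAbs_sq]) (Int.natAbs_dvd.mpr ⟨e, hde⟩)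
  rcases le_total |p| |q| with hpq | hqp
  · obtain ⟨r, hr, hdvd⟩ := exists_abs_lt_of_eq_mul hc hF (large p q hF hp) hpq
    exact ⟨r, hr, Or.inl hdvd⟩
  · have hF' := hF.trans (mul_comm p q)
    obtain ⟨r, hr, hdvd⟩ := exists_abs_lt_of_eq_mul hc hF' (large q p hF' hq) hqp
    exact ⟨r, hr, Or.inr hdvd⟩

lemma not_dvd_of_forall_zmod_ne_zero {d : ℕ} {c : ℤ}
    (h : ∀ x : ZMod d, 2 * x ^ 2 + 2 * x + (c : ZMod d) ≠ 0) (n : ℤ) :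
    ¬ (d : ℤ) ∣ 2 * n ^ 2 + 2 * n + c := by
  intro hd
  have := (ZMod.intCast_zmod_eq_zero_iff_dvd _ d).mpr hd
  push_cast at this
  exact h n this

/-- For each `c ∈ {1, 2, 3, 7, 19}`, the polynomial `F(n) = 2 * n ^ 2 + 2 * n + c` is
recursively-factorable. -/
theorem stmt_8 :
    ∀ c : ℤ, c ∈ ({1, 2, 3, 7, 19} : Set ℤ) →
      RecursivelyFactorable (fun n : ℤ => 2 * n ^ 2 + 2 * n + c) := by
  intro c hc
  simp only [Set.mem_insert_iff, Set.mem_singleton_iff] at hc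
  refine recursivelyFactorable_of_no_small_divisor (by omega)
    fun n d hd2 hd => not_dvd_of_forall_zmod_ne_zero ?_ n
  have hd7 : d < 7 := by
    have : (d : ℤ) < 7 := by rcases hc with rfl | rfl | rfl | rfl | rfl <;> nlinarith
    exact_mod_cast this
  rcases hc with rfl | rfl | rfl | rfl | rfl <;> interval_cases d <;>
    first | decide | (norm_num at hd)
end

section
/- The polynomial F(n) = 3n² + 2 is recursively-factorable, and for each c ∈ {1, 2, 5, 11, 23} the polynomial G(n) = 3n² + 3n + c is recursively-factorable. -/
theorem RecursivelyFactorable.of_forall_sq_le {F : ℤ → ℤ} (hpos : ∀ n, 0 < F n)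
    (hdesc : ∀ n d, d ∣ F n → 2 ≤ |d| → d ^ 2 ≤ F n → ∃ r, F r < F n ∧ d ∣ r - n) :
    RecursivelyFactorable F := by
  intro n p q hpq hp hq
  have hFn := hpos n
  have hp0 : p ≠ 0 := by rintro rfl; simp at hpq; omega
  have hq0 : q ≠ 0 := by rintro rfl; simp at hpq; omega
  have hp2 : 2 ≤ |p| := by have := abs_pos.mpr hp0; omega
  have hq2 : 2 ≤ |q| := by have := abs_pos.mpr hq0; omega
  have habs : |p| * |q| = F n := by rw [← abs_mul, ← hpq, abs_of_pos hFn]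
  have descend : ∀ d, d ∣ F n → 2 ≤ |d| → d ^ 2 ≤ F n → ∃ r, |F r| < |F n| ∧ d ∣ r - n := by
    intro d hd hd2 hdsq
    obtain ⟨r, hr, hdr⟩ := hdesc n d hd hd2 hdsq
    exact ⟨r, by rwa [abs_of_pos (hpos r), abs_of_pos hFn], hdr⟩
  rcases le_total |p| |q| with hle | hle
  · obtain ⟨r, hr, hdr⟩ := descend p ⟨q, hpq⟩ hp2 (by nlinarith [sq_abs p])
    exact ⟨r, hr, Or.inl hdr⟩
  · obtain ⟨r, hr, hdr⟩ := descend q ⟨p, by rw [hpq, mul_comm]⟩ hq2 (by nlinarith [sq_abs q])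
    exact ⟨r, hr, Or.inr hdr⟩

theorem exists_dvd_sub_and_abs_two_mul_add_le (n d e : ℤ) (hd : d ≠ 0) (he0 : 0 ≤ e)
    (he1 : e ≤ 1) : ∃ r, d ∣ r - n ∧ |2 * r + e| ≤ |d| := by
  have hm : 0 < d.natAbs := Int.natAbs_pos.mpr hd
  have hlow := Int.le_bmod (x := n) hm
  have hhigh := Int.bmod_lt (x := n) hm
  refine ⟨n.bmod d.natAbs, Int.natAbs_dvd.mp Int.dvd_bmod_sub_self, ?_⟩
  rw [Int.abs_eq_natAbs d, abs_le]
  omega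

theorem abs_lt_sq_of_prime_of_dvd {p d : ℤ} (hp : Prime p) (hdp : d ∣ p) (hd : 2 ≤ |d|) :
    |p| < d ^ 2 := by
  have hnat : p.natAbs.Prime := Int.prime_iff_natAbs_prime.mp hp
  rcases hnat.eq_one_or_self_of_dvd d.natAbs (Int.natAbs_dvd_natAbs.mpr hdp) with h | h
  · rw [Int.abs_eq_natAbs, h] at hd
    norm_num at hd
  · have hdp' : |d| = |p| := by rw [Int.abs_eq_natAbs, Int.abs_eq_natAbs, h]
    nlinarith [sq_abs d]

theorem recursivelyFactorable_of_four_mul_eq {F : ℤ → ℤ} {a e k : ℤ} (ha0 : 0 < a) (he0 : 0 ≤ e)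
    (he1 : e ≤ 1) (hk : 0 < k) (hF : ∀ n, 4 * F n = a * (2 * n + e) ^ 2 + k)
    (hsmall : ∀ n, (4 - a) * (2 * n + e) ^ 2 ≤ k → F n = 1 ∨ Prime (F n)) :
    RecursivelyFactorable F := by
  have hpos : ∀ n, 0 < F n := fun n => by nlinarith [hF n, sq_nonneg (2 * n + e)]
  refine .of_forall_sq_le hpos fun n d hdn hd2 hdsq => ?_
  by_cases hn : (4 - a) * (2 * n + e) ^ 2 ≤ k
  · exfalso
    rcases hsmall n hn with h1 | hprime
    · rw [h1] at hdn
      have := Int.le_of_dvd one_pos ((abs_dvd d 1).mpr hdn)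
      omega
    · have := abs_lt_sq_of_prime_of_dvd hprime hdn hd2
      rw [abs_of_pos (hpos n)] at this
      omega
  · obtain ⟨r, hdr, hr⟩ := exists_dvd_sub_and_abs_two_mul_add_le n d e
      (by rintro rfl; simp at hd2) he0 he1
    have hr_sq : (2 * r + e) ^ 2 < (2 * n + e) ^ 2 := by
      nlinarith [sq_le_sq.mpr hr, hF n]
    refine ⟨r, ?_, hdr⟩
    nlinarith [hF r, hF n, mul_lt_mul_of_pos_left hr_sq ha0]

/-- The polynomial `F(n) = 3n² + 2` is recursively-factorable, and for
each `c ∈ {1, 2, 5, 11, 23}` the polynomial `G(n) = 3n² + 3n + c` is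
recursively-factorable. -/
theorem stmt_9 :
    RecursivelyFactorable (fun n : ℤ => 3 * n ^ 2 + 2) ∧
    ∀ c : ℤ, c ∈ ({1, 2, 5, 11, 23} : Set ℤ) →
      RecursivelyFactorable (fun n : ℤ => 3 * n ^ 2 + 3 * n + c) := by
  refine ⟨recursivelyFactorable_of_four_mul_eq (a := 3) (e := 0) (k := 8) (by norm_num)
    le_rfl zero_le_one (by norm_num) (fun n => by ring) fun n hn => ?_, fun c hc => ?_⟩
  · obtain ⟨hlo, hhi⟩ : -1 ≤ n ∧ n ≤ 1 := by constructor <;> nlinarith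
    interval_cases n <;> norm_num [Int.prime_iff_natAbs_prime]
  · simp only [Set.mem_insert_iff, Set.mem_singleton_iff] at hc
    refine recursivelyFactorable_of_four_mul_eq (a := 3) (e := 1) (k := 4 * c - 3)
      (by norm_num) zero_le_one le_rfl (by omega) (fun n => by ring) fun m hm => ?_
    have hm89 : (2 * m + 1) ^ 2 ≤ 89 := by omega
    obtain ⟨hlo, hhi⟩ : -5 ≤ m ∧ m ≤ 4 := by constructor <;> nlinarith
    rcases hc with rfl | rfl | rfl | rfl | rfl <;> interval_cases m <;> revert hm <;>
      norm_num [Int.prime_iff_natAbs_prime]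
end

section
/- For each c ∈ {1, 3, 7}, the polynomial F(n) = 4n² + c is recursively-factorable. -/
theorem Int.exists_dvd_sub_two_mul_abs_le {p : ℤ} (hp : p ≠ 0) (n : ℤ) :
    ∃ r, p ∣ r - n ∧ 2 * |r| ≤ |p| := by
  have hpos : 0 < p.natAbs := Int.natAbs_pos.mpr hp
  refine ⟨n.bmod p.natAbs, Int.natAbs_dvd.mp Int.dvd_bmod_sub_self, ?_⟩
  have hlo := Int.le_bmod (x := n) hpos
  have hhi := Int.bmod_le (x := n) hpos
  rw [Int.abs_eq_natAbs p]
  rcases abs_cases (n.bmod p.natAbs) with ⟨h, -⟩ | ⟨h, -⟩ <;> omega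

theorem Int.abs_eq_one_or_abs_eq_one_of_mul_eq {m p q : ℤ} (h : m = p * q)
    (hm : m.natAbs = 1 ∨ m.natAbs.Prime) : |p| = 1 ∨ |q| = 1 := by
  rw [h, Int.natAbs_mul, Nat.prime_mul_iff, mul_eq_one] at hm
  rw [Int.abs_eq_natAbs, Int.abs_eq_natAbs]
  omega

section FourMulSqAdd

variable {c n p q : ℤ}

theorem abs_lt_two_mul_abs_of_four_mul_sq_add_eq_mul (hc : Odd c) (hc0 : 0 < c)
    (hn : c < 4 * |n| + 1) (h : 4 * n ^ 2 + c = p * q) (hpq : |p| ≤ |q|) :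
    |p| < 2 * |n| := by
  have hp_sq : |p| ^ 2 ≤ 4 * n ^ 2 + c := by
    calc |p| ^ 2 = |p| * |p| := sq _
      _ ≤ |p| * |q| := mul_le_mul_of_nonneg_left hpq (abs_nonneg p)
      _ = 4 * n ^ 2 + c := by rw [← abs_mul, ← h, abs_of_pos (by positivity)]
  have hp_le : |p| ≤ 2 * |n| := by
    have : |p| ^ 2 < (2 * |n| + 1) ^ 2 := by nlinarith [sq_abs n]
    nlinarith [abs_nonneg p, abs_nonneg n]
  have hp_odd : Odd p := by
    have hF : Odd (4 * n ^ 2 + c) :=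
      Even.add_odd ⟨2 * n ^ 2, by ring⟩ hc
    rw [h] at hF
    exact (Int.odd_mul.mp hF).1
  obtain ⟨k, rfl⟩ := hp_odd
  rcases abs_cases (2 * k + 1) with ⟨hk, -⟩ | ⟨hk, -⟩ <;> omega

theorem recursivelyFactorable_four_mul_sq_add (hc : Odd c) (hc0 : 0 < c)
    (hsmall : ∀ n p q : ℤ, 4 * |n| + 1 ≤ c → 4 * n ^ 2 + c = p * q → |p| = 1 ∨ |q| = 1) :
    RecursivelyFactorable (fun n : ℤ => 4 * n ^ 2 + c) := by
  intro n p q h hp hq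
  dsimp only at h ⊢
  wlog hpq : |p| ≤ |q| generalizing p q
  · obtain ⟨r, hr, hdvd⟩ := this q p (by rw [h, mul_comm]) hq hp (le_of_not_ge hpq)
    exact ⟨r, hr, hdvd.symm⟩
  have hn : c < 4 * |n| + 1 := by
    by_contra! hn
    exact (hsmall n p q hn h).elim hp hq
  have hp_lt := abs_lt_two_mul_abs_of_four_mul_sq_add_eq_mul hc hc0 hn h hpq
  have hp0 : p ≠ 0 := by
    rintro rfl
    nlinarith [sq_nonneg n]
  obtain ⟨r, hdvd, hr⟩ := Int.exists_dvd_sub_two_mul_abs_le hp0 n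
  refine ⟨r, ?_, Or.inl hdvd⟩
  have hrn : r ^ 2 < n ^ 2 := sq_lt_sq.mpr (by linarith)
  rw [abs_of_pos (by positivity), abs_of_pos (by positivity)]
  linarith

end FourMulSqAdd

theorem natAbs_four_mul_sq_add_eq_one_or_prime {c n : ℤ} (hc : c = 1 ∨ c = 3 ∨ c = 7)
    (hn : 4 * |n| + 1 ≤ c) : (4 * n ^ 2 + c).natAbs = 1 ∨ (4 * n ^ 2 + c).natAbs.Prime := by
  have hn' : -1 ≤ n ∧ n ≤ 1 := by
    rw [← abs_le]
    omega
  obtain ⟨hlo, hhi⟩ := hn'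
  rcases hc with rfl | rfl | rfl <;> interval_cases n <;> norm_num

/-- For each `c ∈ {1, 3, 7}`, the polynomial `F(n) = 4 * n ^ 2 + c` is
recursively-factorable. -/
theorem stmt_10 :
    ∀ c : ℤ, c ∈ ({1, 3, 7} : Set ℤ) →
      RecursivelyFactorable (fun n : ℤ => 4 * n ^ 2 + c) := by
  intro c hc
  simp only [Set.mem_insert_iff, Set.mem_singleton_iff] at hc
  refine recursivelyFactorable_four_mul_sq_add ?_ (by omega) fun n p q hn h =>
    Int.abs_eq_one_or_abs_eq_one_of_mul_eq h ?_
  · rcases hc with rfl | rfl | rfl <;> decide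
  · exact natAbs_four_mul_sq_add_eq_one_or_prime hc hn
end
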